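/- arXiv:2506.11707 — 3 statements merged into one kernel-verified Lean document; each statement's English description precedes it below -/
import Mathlib

section
/- Let A and B be bounded self-adjoint operators on a separable complex Hilbert space, and let ‖·‖ denote the operator norm. Then for every t ≥ 0, ‖[e^{itA}, B]‖ ≤ t · ‖[A,B]‖. -/
/-!
Write `J = iA`, which is skew-adjoint, so every `exp (sJ)` is unitary and has norm at most `1`.
The path `f s = exp (sJ) B exp ((t - s)J)` runs from `B exp (tJ)` to `exp (tJ) B`, and its
derivative `exp (sJ) [J, B] exp ((t - s)J)` has norm at most `‖[J, B]‖ = ‖[A, B]‖`; the mean value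
inequality gives the bound `|t| ‖[A, B]‖`.
-/

open NormedSpace

section BanachAlgebra

variable {𝔸 : Type*} [NormedRing 𝔸] [NormedAlgebra ℝ 𝔸] [CompleteSpace 𝔸]

theorem hasDerivAt_exp_smul_mul_mul_exp_smul (J B : 𝔸) (t s : ℝ) :
    HasDerivAt (fun u : ℝ => exp (u • J) * B * exp ((t - u) • J))
      (exp (s • J) * (J * B - B * J) * exp ((t - s) • J)) s := by
  have hleft : HasDerivAt (fun u : ℝ => exp (u • J) * B) (exp (s • J) * J * B) s :=
    (hasDerivAt_exp_smul_const J s).mul_const B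
  have hright :
      HasDerivAt (fun u : ℝ => exp ((t - u) • J)) ((-1 : ℝ) • (J * exp ((t - s) • J))) s :=
    (hasDerivAt_exp_smul_const' J (t - s)).scomp s ((hasDerivAt_id s).const_sub t)
  refine (hleft.mul hright).congr_deriv ?_
  rw [neg_one_smul]
  noncomm_ring

theorem norm_exp_smul_mul_sub_mul_exp_smul_le {J : 𝔸} (hJ : ∀ s : ℝ, ‖exp (s • J)‖ ≤ 1)
    (B : 𝔸) (t : ℝ) :
    ‖exp (t • J) * B - B * exp (t • J)‖ ≤ ‖J * B - B * J‖ * |t| := by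
  have hbound (s : ℝ) :
      ‖exp (s • J) * (J * B - B * J) * exp ((t - s) • J)‖ ≤ ‖J * B - B * J‖ :=
    calc _ ≤ ‖exp (s • J)‖ * ‖J * B - B * J‖ * ‖exp ((t - s) • J)‖ := norm_mul₃_le
      _ ≤ 1 * ‖J * B - B * J‖ * 1 := by gcongr <;> exact hJ _
      _ = ‖J * B - B * J‖ := by ring
  simpa using convex_univ.norm_image_sub_le_of_norm_hasDerivWithin_le
    (fun s _ => (hasDerivAt_exp_smul_mul_mul_exp_smul J B t s).hasDerivWithinAt)
    (fun s _ => hbound s) (Set.mem_univ 0) (Set.mem_univ t)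

end BanachAlgebra

theorem norm_exp_le_one_of_mem_skewAdjoint {A : Type*} [NormedRing A] [StarRing A] [CStarRing A]
    [NormedAlgebra ℚ A] [CompleteSpace A] {x : A} (hx : x ∈ skewAdjoint A) : ‖exp x‖ ≤ 1 := by
  rcases subsingleton_or_nontrivial A with _ | _
  · simp [Subsingleton.elim (exp x) 0]
  · exact (CStarRing.norm_of_mem_unitary (exp_mem_unitary_of_mem_skewAdjoint hx)).le

theorem commutator_exp_norm_le_general {H : Type*} [NormedAddCommGroup H] [InnerProductSpace ℂ H]
    [CompleteSpace H]
    (A B : H →L[ℂ] H) (hA : IsSelfAdjoint A)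
    (t : ℝ) (ht : 0 ≤ t) :
    ‖NormedSpace.exp ((t : ℂ) • (Complex.I • A)) * B
      - B * NormedSpace.exp ((t : ℂ) • (Complex.I • A))‖ ≤ t * ‖A * B - B * A‖ := by
  -- `NormedAlgebra ℚ` is not inferred from the `ℂ`-algebra structure
  let +nondep : NormedAlgebra ℚ (H →L[ℂ] H) := .restrictScalars ℚ ℂ _
  have hskew : Complex.I • A ∈ skewAdjoint (H →L[ℂ] H) := hA.smul_mem_skewAdjoint Complex.conj_I
  have hcomm : (Complex.I • A) * B - B * (Complex.I • A) = Complex.I • (A * B - B * A) := by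
    rw [smul_mul_assoc, mul_smul_comm, smul_sub]
  have := norm_exp_smul_mul_sub_mul_exp_smul_le
    (fun s => norm_exp_le_one_of_mem_skewAdjoint (skewAdjoint.smul_mem s hskew)) B t
  rwa [hcomm, norm_smul, Complex.norm_I, one_mul, abs_of_nonneg ht, mul_comm,
    ← Complex.coe_smul] at this

/-- For bounded self-adjoint operators `A`, `B` on a separable complex Hilbert
space and `t ≥ 0`, `‖[e^{itA}, B]‖ ≤ t · ‖[A,B]‖`. -/
theorem commutator_exp_norm_le {H : Type*} [NormedAddCommGroup H] [InnerProductSpace ℂ H]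
    [CompleteSpace H] [TopologicalSpace.SeparableSpace H]
    (A B : H →L[ℂ] H) (hA : IsSelfAdjoint A) (hB : IsSelfAdjoint B)
    (t : ℝ) (ht : 0 ≤ t) :
    ‖NormedSpace.exp ((t : ℂ) • (Complex.I • A)) * B
      - B * NormedSpace.exp ((t : ℂ) • (Complex.I • A))‖ ≤ t * ‖A * B - B * A‖ :=
  commutator_exp_norm_le_general A B hA t ht
end

section
/- Let A, B be bounded self-adjoint operators on a separable Hilbert space and Δ a trace-class operator. Suppose ‖[A,B]‖ ≤ ε, ‖Δ‖_tr ≤ C, and ‖Δ(A−B)‖_tr ≤ ε. Then for every t ≥ 0, ‖Δ(e^{itA} − e^{itB})‖_tr ≤ ε t (1 + (C/2) t). -/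
/-!
Duhamel's formula writes `Δ (e^{itA} - e^{itB})` as `∫₀ᵗ Δ e^{isA} i(A - B) e^{i(t-s)B} ds`.
Since `e^{isA}` commutes with `A`, `Δ e^{isA} (A - B) = Δ (A - B) e^{isA} - Δ [e^{isA}, B]`, and by
Duhamel again `[e^{isA}, B] = ∫₀ˢ e^{irA} i[A, B] e^{i(s-r)A} dr`. The trace norm does not grow under
right multiplication by a unitary, and `‖T S‖₁ ≤ ‖S‖ ‖T‖₁` for self-adjoint `S` because a self-adjoint
contraction is the real part of a unitary. Hence the integrand has trace norm at most `ε + s ε C`,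
which integrates to `ε t (1 + C t / 2)`.
-/

open scoped InnerProductSpace ENNReal

/-- The trace norm (Schatten-1 norm) of an operator, defined through its classical
variational characterization: `‖T‖₁ = sup ∑ᵢ |⟪eᵢ, T fᵢ⟫|` over finite orthonormal
families `(eᵢ)`, `(fᵢ)`.  It takes the value `∞` iff `T` is not trace class. -/
noncomputable def traceNorm {H : Type*} [NormedAddCommGroup H] [InnerProductSpace ℂ H]
    (T : H →L[ℂ] H) : ℝ≥0∞ :=
  ⨆ (n : ℕ) (e : Fin n → H) (f : Fin n → H) (_ : Orthonormal ℂ e) (_ : Orthonormal ℂ f),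
    ENNReal.ofReal (∑ i, ‖⟪e i, T (f i)⟫_ℂ‖)

open NormedSpace Complex

theorem IsSelfAdjoint.exists_mem_unitary_eq_norm_smul {A : Type*} [CStarAlgebra A]
    [PartialOrder A] [StarOrderedRing A] {x : A} (hx : IsSelfAdjoint x) :
    ∃ u ∈ unitary A, x = ‖x‖ • (2 : ℝ)⁻¹ • (u + star u) := by
  rcases eq_or_ne x 0 with rfl | hx0
  · exact ⟨1, one_mem _, by simp⟩
  have hnorm : ‖x‖ ≠ 0 := norm_ne_zero_iff.2 hx0
  let a : selfAdjoint A := ‖x‖⁻¹ • ⟨x, hx⟩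
  have ha : ‖a‖ ≤ 1 := by simp [a, norm_smul, inv_mul_cancel₀ hnorm]
  refine ⟨_, (selfAdjoint.unitarySelfAddISMul a ha).prop, ?_⟩
  rw [← realPart_apply_coe, selfAdjoint.realPart_unitarySelfAddISMul]
  simp [a, smul_inv_smul₀ hnorm]

theorem IsSelfAdjoint.exp_smul_I_smul_mem_unitary {𝔸 : Type*} [NormedRing 𝔸] [NormedAlgebra ℂ 𝔸]
    [StarRing 𝔸] [ContinuousStar 𝔸] [CompleteSpace 𝔸] [StarModule ℂ 𝔸] {a : 𝔸}
    (ha : IsSelfAdjoint a) (s : ℝ) : NormedSpace.exp (s • I • a) ∈ unitary 𝔸 := by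
  simpa [smul_comm s I] using (selfAdjoint.expUnitary (s • (⟨a, ha⟩ : selfAdjoint 𝔸))).prop

theorem IsSelfAdjoint.I_smul_commutator {R : Type*} [Ring R] [StarRing R] [Module ℂ R]
    [StarModule ℂ R] {a b : R} (ha : IsSelfAdjoint a) (hb : IsSelfAdjoint b) :
    IsSelfAdjoint (I • (a * b - b * a)) := by
  simp only [IsSelfAdjoint, star_smul, star_sub, star_mul, ha.star_eq, hb.star_eq, star_def,
    conj_I, neg_smul, smul_sub]
  abel

section Duhamel

variable {𝔸 : Type*} [NormedRing 𝔸] [NormedAlgebra ℝ 𝔸] [CompleteSpace 𝔸]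

theorem continuous_exp_smul (X : 𝔸) : Continuous fun s : ℝ => exp (s • X) :=
  continuous_iff_continuousAt.2 fun s => (hasDerivAt_exp_smul_const X s).continuousAt

theorem continuous_exp_smul_mul_mul_exp_smul (X Y D : 𝔸) (t : ℝ) :
    Continuous fun s : ℝ => exp (s • X) * D * exp ((t - s) • Y) :=
  ((continuous_exp_smul X).mul continuous_const).mul
    ((continuous_exp_smul Y).comp (continuous_sub_left t))

theorem exp_smul_mul_sub_mul_exp_smul (X Y D : 𝔸) (t : ℝ) :
    exp (t • X) * D - D * exp (t • Y) =
      ∫ s in (0 : ℝ)..t, exp (s • X) * (X * D - D * Y) * exp ((t - s) • Y) := by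
  have hderiv (s : ℝ) : HasDerivAt (fun u : ℝ => exp (u • X) * D * exp ((t - u) • Y))
      (exp (s • X) * (X * D - D * Y) * exp ((t - s) • Y)) s := by
    have hY : HasDerivAt (fun u : ℝ => exp ((t - u) • Y)) (-(Y * exp ((t - s) • Y))) s := by
      simpa [Function.comp_def] using
        (hasDerivAt_exp_smul_const' Y (t - s)).scomp s ((hasDerivAt_id s).const_sub t)
    refine (((hasDerivAt_exp_smul_const X s).mul_const D).mul hY).congr_deriv ?_
    noncomm_ring
  rw [intervalIntegral.integral_eq_sub_of_hasDerivAt (fun s _ => hderiv s)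
    ((continuous_exp_smul_mul_mul_exp_smul X Y (X * D - D * Y) t).intervalIntegrable 0 t)]
  simp

end Duhamel

section traceNorm

variable {H : Type*} [NormedAddCommGroup H] [InnerProductSpace ℂ H]

theorem ofReal_sum_le_traceNorm (T : H →L[ℂ] H) {n : ℕ} {e f : Fin n → H}
    (he : Orthonormal ℂ e) (hf : Orthonormal ℂ f) :
    ENNReal.ofReal (∑ i, ‖⟪e i, T (f i)⟫_ℂ‖) ≤ traceNorm T :=
  le_iSup_of_le n <| le_iSup_of_le e <| le_iSup_of_le f <|
    le_iSup_of_le he <| le_iSup_of_le hf le_rfl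

theorem traceNorm_le_of_forall {T : H →L[ℂ] H} {c : ℝ≥0∞}
    (h : ∀ (n : ℕ) (e f : Fin n → H), Orthonormal ℂ e → Orthonormal ℂ f →
      ENNReal.ofReal (∑ i, ‖⟪e i, T (f i)⟫_ℂ‖) ≤ c) : traceNorm T ≤ c :=
  iSup_le fun n => iSup_le fun e => iSup_le fun f => iSup_le fun he => iSup_le fun hf =>
    h n e f he hf

@[simp]
theorem traceNorm_zero : traceNorm (0 : H →L[ℂ] H) = 0 :=
  nonpos_iff_eq_zero.1 <| traceNorm_le_of_forall fun _ _ _ _ _ => by simp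

theorem traceNorm_add_le (S T : H →L[ℂ] H) : traceNorm (S + T) ≤ traceNorm S + traceNorm T := by
  refine traceNorm_le_of_forall fun n e f he hf => ?_
  calc ENNReal.ofReal (∑ i, ‖⟪e i, (S + T) (f i)⟫_ℂ‖)
      ≤ ENNReal.ofReal ((∑ i, ‖⟪e i, S (f i)⟫_ℂ‖) + ∑ i, ‖⟪e i, T (f i)⟫_ℂ‖) := by
        rw [← Finset.sum_add_distrib]
        gcongr with i
        simpa only [add_apply, inner_add_right] using norm_add_le _ _
    _ ≤ ENNReal.ofReal (∑ i, ‖⟪e i, S (f i)⟫_ℂ‖) + ENNReal.ofReal (∑ i, ‖⟪e i, T (f i)⟫_ℂ‖) :=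
        ENNReal.ofReal_add_le
    _ ≤ traceNorm S + traceNorm T :=
        add_le_add (ofReal_sum_le_traceNorm S he hf) (ofReal_sum_le_traceNorm T he hf)

theorem traceNorm_smul_le (c : ℂ) (T : H →L[ℂ] H) :
    traceNorm (c • T) ≤ ENNReal.ofReal ‖c‖ * traceNorm T := by
  refine traceNorm_le_of_forall fun n e f he hf => ?_
  have hsum : ∑ i, ‖⟪e i, (c • T) (f i)⟫_ℂ‖ = ‖c‖ * ∑ i, ‖⟪e i, T (f i)⟫_ℂ‖ := by
    simp [Finset.mul_sum]
  rw [hsum, ENNReal.ofReal_mul (norm_nonneg c)]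
  exact mul_le_mul_right (ofReal_sum_le_traceNorm T he hf) _

theorem traceNorm_sub_le (S T : H →L[ℂ] H) : traceNorm (S - T) ≤ traceNorm S + traceNorm T := by
  have hneg : traceNorm (-T) ≤ traceNorm T := by simpa using traceNorm_smul_le (-1) T
  rw [sub_eq_add_neg]
  exact (traceNorm_add_le S (-T)).trans (add_le_add_right hneg _)

variable [CompleteSpace H]

theorem traceNorm_mul_isometry_le (T : H →L[ℂ] H) {U : H →L[ℂ] H} (hU : star U * U = 1) :
    traceNorm (T * U) ≤ traceNorm T := by
  refine traceNorm_le_of_forall fun n e f he hf => ?_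
  have hUf : Orthonormal ℂ (U ∘ f) := by
    rw [orthonormal_iff_ite] at hf ⊢
    intro i j
    have hUU : star U (U (f j)) = f j := congr($hU (f j))
    rw [Function.comp_apply, Function.comp_apply, ← ContinuousLinearMap.adjoint_inner_right,
      ← ContinuousLinearMap.star_eq_adjoint, hUU]
    exact hf i j
  exact ofReal_sum_le_traceNorm T he hUf

theorem traceNorm_intervalIntegral_le {t : ℝ} (ht : 0 ≤ t) {Φ : ℝ → H →L[ℂ] H} {g : ℝ → ℝ}
    (hΦ : Continuous Φ) (hg : Continuous g) (hg0 : ∀ s ∈ Set.Icc 0 t, 0 ≤ g s)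
    (hb : ∀ s ∈ Set.Icc 0 t, traceNorm (Φ s) ≤ ENNReal.ofReal (g s)) :
    traceNorm (∫ s in (0 : ℝ)..t, Φ s) ≤ ENNReal.ofReal (∫ s in (0 : ℝ)..t, g s) := by
  refine traceNorm_le_of_forall fun n e f he hf => ENNReal.ofReal_le_ofReal ?_
  have hcoef (i : Fin n) : Continuous fun s => ⟪e i, Φ s (f i)⟫_ℂ :=
    (innerSL ℂ (e i)).continuous.comp ((ContinuousLinearMap.apply ℂ H (f i)).continuous.comp hΦ)
  have hcoef_integral (i : Fin n) :
      ⟪e i, (∫ s in (0 : ℝ)..t, Φ s) (f i)⟫_ℂ = ∫ s in (0 : ℝ)..t, ⟪e i, Φ s (f i)⟫_ℂ := by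
    rw [ContinuousLinearMap.intervalIntegral_apply (hΦ.intervalIntegrable 0 t)]
    exact ((innerSL ℂ (e i)).intervalIntegral_comp_comm
      (((ContinuousLinearMap.apply ℂ H (f i)).continuous.comp hΦ).intervalIntegrable 0 t)).symm
  calc ∑ i, ‖⟪e i, (∫ s in (0 : ℝ)..t, Φ s) (f i)⟫_ℂ‖
      ≤ ∑ i, ∫ s in (0 : ℝ)..t, ‖⟪e i, Φ s (f i)⟫_ℂ‖ := by
        simp_rw [hcoef_integral]
        gcongr
        exact intervalIntegral.norm_integral_le_integral_norm ht
    _ = ∫ s in (0 : ℝ)..t, ∑ i, ‖⟪e i, Φ s (f i)⟫_ℂ‖ :=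
        (intervalIntegral.integral_finsetSum
          fun i _ => (hcoef i).norm.intervalIntegrable 0 t).symm
    _ ≤ ∫ s in (0 : ℝ)..t, g s := by
        refine intervalIntegral.integral_mono_on ht
          ((continuous_finsetSum _ fun i _ => (hcoef i).norm).intervalIntegrable 0 t)
          (hg.intervalIntegrable 0 t) fun s hs => ?_
        rw [← ENNReal.ofReal_le_ofReal_iff (hg0 s hs)]
        exact (ofReal_sum_le_traceNorm (Φ s) he hf).trans (hb s hs)

theorem traceNorm_mul_le_of_isSelfAdjoint (T : H →L[ℂ] H) {S : H →L[ℂ] H}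
    (hS : IsSelfAdjoint S) : traceNorm (T * S) ≤ ENNReal.ofReal ‖S‖ * traceNorm T := by
  obtain ⟨U, hU, hS_eq⟩ := hS.exists_mem_unitary_eq_norm_smul
  have hTS : T * S = ((‖S‖ / 2 : ℝ) : ℂ) • (T * U + T * star U) := by
    conv_lhs => rw [hS_eq]
    rw [Complex.coe_smul, div_eq_mul_inv, mul_smul, mul_smul_comm, mul_smul_comm, mul_add]
  calc traceNorm (T * S)
      ≤ ENNReal.ofReal (‖S‖ / 2) * (traceNorm (T * U) + traceNorm (T * star U)) := by
        rw [hTS]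
        refine (traceNorm_smul_le _ _).trans ?_
        rw [Complex.norm_real, Real.norm_of_nonneg (by positivity)]
        gcongr
        exact traceNorm_add_le _ _
    _ ≤ ENNReal.ofReal (‖S‖ / 2) * (traceNorm T + traceNorm T) := by
        gcongr
        · exact traceNorm_mul_isometry_le T (Unitary.star_mul_self_of_mem hU)
        · exact traceNorm_mul_isometry_le T (Unitary.star_mul_self_of_mem (Unitary.star_mem hU))
    _ = ENNReal.ofReal ‖S‖ * traceNorm T := by
        rw [← two_mul, ← mul_assoc, ← ENNReal.ofReal_ofNat 2,
          ← ENNReal.ofReal_mul (by positivity), div_mul_cancel₀ _ two_ne_zero]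

end traceNorm

section Estimates

variable {H : Type*} [NormedAddCommGroup H] [InnerProductSpace ℂ H] [CompleteSpace H]

theorem traceNorm_mul_exp_smul_mul_sub_le (Δ X Y D : H →L[ℂ] H) {t : ℝ} (ht : 0 ≤ t)
    {g : ℝ → ℝ} (hg : Continuous g) (hg0 : ∀ s ∈ Set.Icc 0 t, 0 ≤ g s)
    (hb : ∀ s ∈ Set.Icc 0 t,
      traceNorm (Δ * (exp (s • X) * (X * D - D * Y) * exp ((t - s) • Y))) ≤ ENNReal.ofReal (g s)) :
    traceNorm (Δ * (exp (t • X) * D - D * exp (t • Y))) ≤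
      ENNReal.ofReal (∫ s in (0 : ℝ)..t, g s) := by
  have hcont := continuous_exp_smul_mul_mul_exp_smul X Y (X * D - D * Y) t
  have hpush : Δ * ∫ s in (0 : ℝ)..t, exp (s • X) * (X * D - D * Y) * exp ((t - s) • Y) =
      ∫ s in (0 : ℝ)..t, Δ * (exp (s • X) * (X * D - D * Y) * exp ((t - s) • Y)) :=
    ((ContinuousLinearMap.mul ℂ _ Δ).intervalIntegral_comp_comm (hcont.intervalIntegrable 0 t)).symm
  rw [exp_smul_mul_sub_mul_exp_smul, hpush]
  exact traceNorm_intervalIntegral_le ht (continuous_const.mul hcont) hg hg0 hb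

variable {A B Δ : H →L[ℂ] H} {C : ℝ}

theorem traceNorm_mul_commutator_exp_le (hA : IsSelfAdjoint A) (hB : IsSelfAdjoint B) (hC : 0 ≤ C)
    (hΔ : traceNorm Δ ≤ ENNReal.ofReal C) {s : ℝ} (hs : 0 ≤ s) :
    traceNorm (Δ * (exp (s • I • A) * B - B * exp (s • I • A))) ≤
      ENNReal.ofReal (s * (‖A * B - B * A‖ * C)) := by
  have hXB : (I • A) * B - B * (I • A) = I • (A * B - B * A) := by
    rw [smul_mul_assoc, mul_smul_comm, smul_sub]
  have hU (r : ℝ) := Unitary.star_mul_self_of_mem (hA.exp_smul_I_smul_mem_unitary r)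
  refine (traceNorm_mul_exp_smul_mul_sub_le Δ (I • A) (I • A) B hs
    (g := fun _ => ‖A * B - B * A‖ * C) continuous_const (fun _ _ => by positivity)
    fun r _ => ?_).trans_eq (by rw [intervalIntegral.integral_const, sub_zero, smul_eq_mul])
  calc traceNorm (Δ * (exp (r • I • A) * ((I • A) * B - B * (I • A)) * exp ((s - r) • I • A)))
      _ = traceNorm (Δ * exp (r • I • A) * (I • (A * B - B * A)) * exp ((s - r) • I • A)) := by
        rw [hXB, mul_assoc, mul_assoc, mul_assoc]
      _ ≤ traceNorm (Δ * exp (r • I • A) * (I • (A * B - B * A))) :=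
        traceNorm_mul_isometry_le _ (hU _)
      _ ≤ ENNReal.ofReal ‖I • (A * B - B * A)‖ * traceNorm (Δ * exp (r • I • A)) :=
        traceNorm_mul_le_of_isSelfAdjoint _ (hA.I_smul_commutator hB)
      _ ≤ ENNReal.ofReal ‖A * B - B * A‖ * ENNReal.ofReal C := by
        rw [norm_smul, norm_I, one_mul]
        gcongr
        exact (traceNorm_mul_isometry_le _ (hU r)).trans hΔ
      _ = ENNReal.ofReal (‖A * B - B * A‖ * C) := (ENNReal.ofReal_mul (norm_nonneg _)).symm

theorem traceNorm_mul_exp_mul_sub_mul_exp_le (hA : IsSelfAdjoint A) (hB : IsSelfAdjoint B)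
    (hC : 0 ≤ C) (hΔ : traceNorm Δ ≤ ENNReal.ofReal C) {ε : ℝ} (hε : 0 ≤ ε)
    (hcomm : ‖A * B - B * A‖ ≤ ε) (hΔAB : traceNorm (Δ * (A - B)) ≤ ENNReal.ofReal ε)
    {s : ℝ} (hs : 0 ≤ s) (t : ℝ) :
    traceNorm (Δ * (exp (s • I • A) * (I • A - I • B) * exp ((t - s) • I • B))) ≤
      ENNReal.ofReal (ε + s * (ε * C)) := by
  set U := exp (s • I • A)
  set V := exp ((t - s) • I • B)
  have hU := Unitary.star_mul_self_of_mem (hA.exp_smul_I_smul_mem_unitary s)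
  have hV := Unitary.star_mul_self_of_mem (hB.exp_smul_I_smul_mem_unitary (t - s))
  have hUA : Commute U A := (((Commute.refl A).smul_left I).smul_left s).exp_left
  have hsplit : Δ * (U * (I • A - I • B) * V) =
      I • (Δ * (A - B) * U * V - Δ * (U * B - B * U) * V) := by
    rw [← smul_sub, mul_smul_comm, smul_mul_assoc, mul_smul_comm, mul_sub U A B, hUA.eq]
    noncomm_ring
  calc traceNorm (Δ * (U * (I • A - I • B) * V))
      ≤ traceNorm (Δ * (A - B) * U * V - Δ * (U * B - B * U) * V) := by
        simpa [hsplit] using traceNorm_smul_le I (Δ * (A - B) * U * V - Δ * (U * B - B * U) * V)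
    _ ≤ traceNorm (Δ * (A - B) * U * V) + traceNorm (Δ * (U * B - B * U) * V) :=
        traceNorm_sub_le _ _
    _ ≤ ENNReal.ofReal ε + ENNReal.ofReal (s * (ε * C)) := by
        gcongr
        · exact (traceNorm_mul_isometry_le _ hV).trans
            ((traceNorm_mul_isometry_le _ hU).trans hΔAB)
        · refine (traceNorm_mul_isometry_le _ hV).trans
            ((traceNorm_mul_commutator_exp_le hA hB hC hΔ hs).trans ?_)
          gcongr
    _ = ENNReal.ofReal (ε + s * (ε * C)) := (ENNReal.ofReal_add hε (by positivity)).symm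

end Estimates

theorem traceNorm_delta_exp_diff_general {H : Type*} [NormedAddCommGroup H] [InnerProductSpace ℂ H]
    [CompleteSpace H]
    (A B Δ : H →L[ℂ] H) (hA : IsSelfAdjoint A) (hB : IsSelfAdjoint B)
    (ε C : ℝ) (hε : 0 ≤ ε) (hC : 0 ≤ C)
    (hcomm : ‖A * B - B * A‖ ≤ ε)
    (hΔ : traceNorm Δ ≤ ENNReal.ofReal C)
    (hΔAB : traceNorm (Δ * (A - B)) ≤ ENNReal.ofReal ε)
    (t : ℝ) (ht : 0 ≤ t) :
    traceNorm (Δ * (NormedSpace.exp ((t : ℂ) • (Complex.I • A))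
        - NormedSpace.exp ((t : ℂ) • (Complex.I • B))))
      ≤ ENNReal.ofReal (ε * t * (1 + C / 2 * t)) := by
  have hintegral : ∫ s in (0 : ℝ)..t, (ε + s * (ε * C)) = ε * t * (1 + C / 2 * t) := by
    rw [intervalIntegral.integral_add intervalIntegrable_const
      (intervalIntegral.intervalIntegrable_id.mul_const _), intervalIntegral.integral_const,
      intervalIntegral.integral_mul_const, integral_id, smul_eq_mul]
    ring
  rw [Complex.coe_smul, Complex.coe_smul, ← hintegral]
  simpa only [mul_one, one_mul] using traceNorm_mul_exp_smul_mul_sub_le Δ (I • A) (I • B) 1 ht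
    (by fun_prop) (fun s hs => add_nonneg hε (mul_nonneg hs.1 (mul_nonneg hε hC))) fun s hs => by
      simpa only [mul_one, one_mul] using
        traceNorm_mul_exp_mul_sub_mul_exp_le hA hB hC hΔ hε hcomm hΔAB hs.1 t

/-- If `A`, `B` are bounded self-adjoint, `Δ` is trace class with
`‖[A,B]‖ ≤ ε`, `‖Δ‖_tr ≤ C` and `‖Δ(A−B)‖_tr ≤ ε`, then for `t ≥ 0`,
`‖Δ(e^{itA} − e^{itB})‖_tr ≤ ε t (1 + (C/2) t)`. -/
theorem traceNorm_delta_exp_diff {H : Type*} [NormedAddCommGroup H] [InnerProductSpace ℂ H]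
    [CompleteSpace H] [TopologicalSpace.SeparableSpace H]
    (A B Δ : H →L[ℂ] H) (hA : IsSelfAdjoint A) (hB : IsSelfAdjoint B)
    (ε C : ℝ) (hε : 0 ≤ ε) (hC : 0 ≤ C)
    (hcomm : ‖A * B - B * A‖ ≤ ε)
    (hΔ : traceNorm Δ ≤ ENNReal.ofReal C)
    (hΔAB : traceNorm (Δ * (A - B)) ≤ ENNReal.ofReal ε)
    (t : ℝ) (ht : 0 ≤ t) :
    traceNorm (Δ * (NormedSpace.exp ((t : ℂ) • (Complex.I • A))
        - NormedSpace.exp ((t : ℂ) • (Complex.I • B))))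
      ≤ ENNReal.ofReal (ε * t * (1 + C / 2 * t)) :=
  traceNorm_delta_exp_diff_general A B Δ hA hB ε C hε hC hcomm hΔ hΔAB t ht
end

section
/- Let P_N be the Bargmann projection with kernel P_N(x,z) = N e^{N(x z̄ − |x|²/2 − |z|²/2)} on L²(ℂ, γ). For any Lipschitz function g : ℂ → ℝ viewed as a multiplication operator, the commutator satisfies ‖[P_N, g]‖ ≤ C N^{-1/2} Lip(g), where C = ∫₀^∞ √t e^{-t/2} dt and Lip(g) is the Lipschitz constant of g. -/
open MeasureTheory
open scoped ComplexConjugate ENNReal NNReal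

/-- The measure `γ` on `ℂ` with `dγ(z) = π⁻¹ d²z`. -/
noncomputable def gammaMeasure : Measure ℂ := ENNReal.ofReal (1 / Real.pi) • (volume : Measure ℂ)

/-- The Bargmann kernel `P_N(x,z) = N e^{N(x z̄ − |x|²/2 − |z|²/2)}`. -/
noncomputable def bargmannKernel (N : ℝ) (x z : ℂ) : ℂ :=
  (N : ℂ) * Complex.exp ((N : ℂ) * (x * conj z - (‖x‖ : ℂ) ^ 2 / 2 - (‖z‖ : ℂ) ^ 2 / 2))

/-!
The commutator applied to `u` is `x ↦ ∫ (g z - g x) P_N(x,z) u(z) dγ(z)`, and since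
`|P_N(x,z)| = N e^{-N|x-z|²/2}`, the Lipschitz bound dominates its kernel by the convolution kernel
`L |x-z| N e^{-N|x-z|²/2}`. By the Schur test the `L²(γ)` norm of the commutator is at most the
`γ`-integral of that kernel, and in polar coordinates this integral and `C` are both multiples of
`Γ(3/2)`, with ratio `L N^{-1/2}`.
-/

open Real

section Schur

variable {α β : Type*} [MeasurableSpace α] [MeasurableSpace β] {μ : Measure α} {ν : Measure β}

theorem ENNReal.sq_lintegral_mul_le {w f : α → ℝ≥0∞} (hw : AEMeasurable w μ)
    (hf : AEMeasurable f μ) :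
    (∫⁻ a, w a * f a ∂μ) ^ 2 ≤ (∫⁻ a, w a ∂μ) * ∫⁻ a, w a * f a ^ 2 ∂μ := by
  have hsqrt (a : ℝ≥0∞) : (a ^ (1 / 2 : ℝ)) ^ (2 : ℝ) = a := by
    rw [← ENNReal.rpow_mul]; norm_num
  -- Hölder for the factorization `w f = w^{1/2} · (w^{1/2} f)`
  have h := ENNReal.lintegral_mul_le_Lp_mul_Lq μ Real.HolderConjugate.two_two
    (hw.pow_const (1 / 2 : ℝ)) ((hw.pow_const (1 / 2 : ℝ)).mul hf)
  simp only [Pi.mul_apply, ← mul_assoc, ← ENNReal.rpow_add_of_nonneg _ _ one_half_pos.le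
    one_half_pos.le, ENNReal.mul_rpow_of_nonneg _ _ zero_le_two, hsqrt] at h
  norm_num [ENNReal.rpow_two] at h
  calc (∫⁻ a, w a * f a ∂μ) ^ 2
      ≤ ((∫⁻ a, w a ∂μ) ^ (1 / 2 : ℝ) * (∫⁻ a, w a * f a ^ 2 ∂μ) ^ (1 / 2 : ℝ)) ^ 2 := by gcongr
    _ = (∫⁻ a, w a ∂μ) * ∫⁻ a, w a * f a ^ 2 ∂μ := by
      rw [mul_pow, ← ENNReal.rpow_two, ← ENNReal.rpow_two, hsqrt, hsqrt]

theorem eLpNorm_two_sq {E : Type*} [ENorm E] (f : α → E) :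
    eLpNorm f 2 μ ^ 2 = ∫⁻ a, ‖f a‖ₑ ^ 2 ∂μ := by
  simpa [ENNReal.rpow_two] using eLpNorm_nnreal_pow_eq_lintegral (f := f) (μ := μ) two_ne_zero

variable [SFinite μ] [SFinite ν] {K : α → β → ℝ≥0∞} {A B : ℝ≥0∞}

theorem lintegral_sq_lintegral_mul_le_of_schur (hK : Measurable (Function.uncurry K))
    {f : β → ℝ≥0∞} (hf : AEMeasurable f ν) (hrow : ∀ x, ∫⁻ y, K x y ∂ν ≤ A)
    (hcol : ∀ y, ∫⁻ x, K x y ∂μ ≤ B) :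
    ∫⁻ x, (∫⁻ y, K x y * f y ∂ν) ^ 2 ∂μ ≤ A * B * ∫⁻ y, f y ^ 2 ∂ν := by
  have hKf : AEMeasurable (Function.uncurry fun x y => K x y * f y ^ 2) (μ.prod ν) :=
    hK.aemeasurable.mul (hf.pow_const 2).comp_snd
  calc ∫⁻ x, (∫⁻ y, K x y * f y ∂ν) ^ 2 ∂μ
      ≤ ∫⁻ x, A * ∫⁻ y, K x y * f y ^ 2 ∂ν ∂μ := by
        refine lintegral_mono fun x => ?_
        calc (∫⁻ y, K x y * f y ∂ν) ^ 2 ≤ (∫⁻ y, K x y ∂ν) * ∫⁻ y, K x y * f y ^ 2 ∂ν :=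
              ENNReal.sq_lintegral_mul_le hK.of_uncurry_left.aemeasurable hf
          _ ≤ A * ∫⁻ y, K x y * f y ^ 2 ∂ν := by gcongr; exact hrow x
    _ = A * ∫⁻ y, ∫⁻ x, K x y * f y ^ 2 ∂μ ∂ν := by
        rw [lintegral_const_mul'' _ hKf.lintegral_prod_right, lintegral_lintegral_swap hKf]
    _ = A * ∫⁻ y, (∫⁻ x, K x y ∂μ) * f y ^ 2 ∂ν := by
        simp_rw [lintegral_mul_const _ hK.of_uncurry_right]
    _ ≤ A * ∫⁻ y, B * f y ^ 2 ∂ν := by gcongr with y; exact hcol y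
    _ = A * B * ∫⁻ y, f y ^ 2 ∂ν := by rw [lintegral_const_mul'' _ (hf.pow_const 2), mul_assoc]

theorem eLpNorm_two_sq_le_of_schur {E F : Type*} [ENorm E] [TopologicalSpace F]
    [ContinuousENorm F] (hK : Measurable (Function.uncurry K)) {T : α → E} {f : β → F}
    (hf : AEStronglyMeasurable f ν) (hrow : ∀ x, ∫⁻ y, K x y ∂ν ≤ A)
    (hcol : ∀ y, ∫⁻ x, K x y ∂μ ≤ B) (hT : ∀ x, ‖T x‖ₑ ≤ ∫⁻ y, K x y * ‖f y‖ₑ ∂ν) :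
    eLpNorm T 2 μ ^ 2 ≤ A * B * eLpNorm f 2 ν ^ 2 := by
  rw [eLpNorm_two_sq, eLpNorm_two_sq]
  calc ∫⁻ x, ‖T x‖ₑ ^ 2 ∂μ ≤ ∫⁻ x, (∫⁻ y, K x y * ‖f y‖ₑ ∂ν) ^ 2 ∂μ := by
        gcongr with x; exact hT x
    _ ≤ A * B * ∫⁻ y, ‖f y‖ₑ ^ 2 ∂ν :=
        lintegral_sq_lintegral_mul_le_of_schur hK hf.enorm hrow hcol

end Schur

theorem Complex.integrable_rpow_mul_exp_neg_mul_rpow {p q b : ℝ} (hp : 1 ≤ p) (hq : -2 < q)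
    (hb : 0 < b) : Integrable fun x : ℂ => ‖x‖ ^ q * rexp (-b * ‖x‖ ^ p) := by
  refine Integrable.of_integral_ne_zero ?_
  have hp₀ : 0 < p := by linarith
  have := Gamma_pos_of_pos (show 0 < (q + 2) / p by apply div_pos <;> linarith)
  rw [Complex.integral_rpow_mul_exp_neg_mul_rpow hp hq hb]
  positivity

lemma Complex.integral_norm_mul_exp_neg_mul_sq {b : ℝ} (hb : 0 < b) :
    ∫ w : ℂ, ‖w‖ * rexp (-b * ‖w‖ ^ 2) = π * b ^ (-(3 / 2 : ℝ)) * Real.Gamma (3 / 2) := by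
  have h := Complex.integral_rpow_mul_exp_neg_mul_rpow (p := 2) (q := 1) one_le_two
    (by norm_num) hb
  norm_num at h
  simpa only [neg_mul] using h

lemma integral_sqrt_mul_exp_neg_half :
    ∫ t in Set.Ioi (0 : ℝ), √t * rexp (-t / 2) = (1 / 2) ^ (-(3 / 2 : ℝ)) * Gamma (3 / 2) := by
  have h := integral_rpow_mul_exp_neg_mul_rpow (p := 1) (q := 1 / 2) (b := 1 / 2)
    one_pos (by norm_num) (by norm_num)
  norm_num at h
  rw [← h]
  refine setIntegral_congr_fun measurableSet_Ioi fun t _ => ?_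
  rw [sqrt_eq_rpow]
  ring_nf

instance : SFinite gammaMeasure := by unfold gammaMeasure; infer_instance

instance : gammaMeasure.IsAddRightInvariant := by unfold gammaMeasure; infer_instance

lemma MeasureTheory.Integrable.gammaMeasure {E : Type*} [NormedAddCommGroup E] {f : ℂ → E}
    (hf : Integrable f) : Integrable f gammaMeasure :=
  hf.smul_measure ENNReal.ofReal_ne_top

lemma integral_gammaMeasure {E : Type*} [NormedAddCommGroup E] [NormedSpace ℝ E] (f : ℂ → E) :
    ∫ z, f z ∂gammaMeasure = π⁻¹ • ∫ z, f z := by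
  rw [gammaMeasure, integral_smul_measure, ENNReal.toReal_ofReal (by positivity), one_div]

lemma lintegral_norm_mul_gaussian_gammaMeasure {N : ℝ} (hN : 0 < N) :
    ∫⁻ w, ENNReal.ofReal (‖w‖ * (N * rexp (-(N / 2) * ‖w‖ ^ 2))) ∂gammaMeasure
      = ENNReal.ofReal ((∫ t in Set.Ioi (0 : ℝ), √t * rexp (-t / 2)) * (√N)⁻¹) := by
  have hb : 0 < N / 2 := by positivity
  have hint : Integrable (fun w : ℂ => ‖w‖ * rexp (-(N / 2) * ‖w‖ ^ 2)) := by
    refine Integrable.of_integral_ne_zero ?_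
    have := Gamma_pos_of_pos (show (0 : ℝ) < 3 / 2 by norm_num)
    rw [Complex.integral_norm_mul_exp_neg_mul_sq hb]
    positivity
  rw [← ofReal_integral_eq_lintegral_ofReal
    ((hint.const_mul N).gammaMeasure.congr (Filter.Eventually.of_forall fun w => by ring))
    (Filter.Eventually.of_forall fun w => by positivity)]
  congr 1
  simp_rw [mul_left_comm _ N]
  rw [integral_gammaMeasure, integral_const_mul, Complex.integral_norm_mul_exp_neg_mul_sq hb,
    integral_sqrt_mul_exp_neg_half, smul_eq_mul, div_eq_mul_one_div N,
    mul_rpow hN.le (by norm_num)]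
  have hN' : N * N ^ (-(3 / 2 : ℝ)) = (√N)⁻¹ := by
    rw [sqrt_eq_rpow, ← rpow_neg hN.le, ← rpow_one_add' hN.le (by norm_num)]
    norm_num
  rw [← hN']
  field_simp

lemma norm_bargmannKernel {N : ℝ} (hN : 0 ≤ N) (x z : ℂ) :
    ‖bargmannKernel N x z‖ = N * rexp (-(N / 2) * ‖x - z‖ ^ 2) := by
  rw [bargmannKernel, norm_mul, Complex.norm_exp, Complex.norm_real, norm_of_nonneg hN,
    Complex.re_ofReal_mul, Complex.sq_norm, Complex.normSq_sub]
  simp only [Complex.sub_re, ← Complex.ofReal_pow, Complex.div_ofNat_re, Complex.ofReal_re,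
    Complex.sq_norm]
  ring_nf

@[fun_prop]
lemma Continuous.bargmannKernel {α : Type*} [TopologicalSpace α] (N : ℝ) {f h : α → ℂ}
    (hf : Continuous f) (hh : Continuous h) :
    Continuous fun a => bargmannKernel N (f a) (h a) := by
  unfold _root_.bargmannKernel; fun_prop

lemma memLp_norm_sub_pow_mul_norm_bargmannKernel {N : ℝ} (hN : 0 < N) (x : ℂ) (k : ℕ) :
    MemLp (fun z => ‖x - z‖ ^ k * ‖bargmannKernel N x z‖) 2 gammaMeasure := by
  rw [memLp_two_iff_integrable_sq (by fun_prop)]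
  have h := ((Complex.integrable_rpow_mul_exp_neg_mul_rpow (p := 2) (q := 2 * k) one_le_two
    (by linarith [k.cast_nonneg (α := ℝ)]) hN).comp_sub_right x).const_mul (N ^ 2)
  refine h.gammaMeasure.congr (Filter.Eventually.of_forall fun z => ?_)
  simp only [norm_bargmannKernel hN.le, norm_sub_rev z x, rpow_two,
    rpow_mul_natCast (norm_nonneg _)]
  rw [mul_pow, mul_pow, ← exp_nat_mul]
  ring_nf

lemma memLp_bargmannKernel {N : ℝ} (hN : 0 < N) (x : ℂ) :
    MemLp (bargmannKernel N x) 2 gammaMeasure :=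
  (memLp_norm_iff (by fun_prop)).1
    (by simpa using memLp_norm_sub_pow_mul_norm_bargmannKernel hN x 0)

lemma enorm_sub_mul_enorm_bargmannKernel {N : ℝ} (hN : 0 ≤ N) (x z : ℂ) :
    ‖x - z‖ₑ * ‖bargmannKernel N x z‖ₑ
      = ENNReal.ofReal (‖x - z‖ * (N * rexp (-(N / 2) * ‖x - z‖ ^ 2))) := by
  rw [← ofReal_norm, ← ofReal_norm, ← ENNReal.ofReal_mul (norm_nonneg _), norm_bargmannKernel hN]

lemma lintegral_enorm_sub_mul_enorm_bargmannKernel_left {N : ℝ} (hN : 0 < N) (z : ℂ) :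
    ∫⁻ x, ‖x - z‖ₑ * ‖bargmannKernel N x z‖ₑ ∂gammaMeasure
      = ENNReal.ofReal ((∫ t in Set.Ioi (0 : ℝ), √t * rexp (-t / 2)) * (√N)⁻¹) := by
  simp_rw [enorm_sub_mul_enorm_bargmannKernel hN.le]
  rw [lintegral_sub_right_eq_self
    (fun w => ENNReal.ofReal (‖w‖ * (N * rexp (-(N / 2) * ‖w‖ ^ 2)))) z]
  exact lintegral_norm_mul_gaussian_gammaMeasure hN

lemma lintegral_enorm_sub_mul_enorm_bargmannKernel_right {N : ℝ} (hN : 0 < N) (x : ℂ) :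
    ∫⁻ z, ‖x - z‖ₑ * ‖bargmannKernel N x z‖ₑ ∂gammaMeasure
      = ENNReal.ofReal ((∫ t in Set.Ioi (0 : ℝ), √t * rexp (-t / 2)) * (√N)⁻¹) := by
  simp_rw [enorm_sub_mul_enorm_bargmannKernel hN.le, norm_sub_rev x]
  rw [lintegral_sub_right_eq_self
    (fun w => ENNReal.ofReal (‖w‖ * (N * rexp (-(N / 2) * ‖w‖ ^ 2)))) x]
  exact lintegral_norm_mul_gaussian_gammaMeasure hN

section Commutator

variable {N : ℝ} {G u : ℂ → ℂ} {L : ℝ≥0}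

lemma integral_bargmannKernel_commutator_eq (hN : 0 < N) (hG : LipschitzWith L G)
    (hu : MemLp u 2 gammaMeasure) (x : ℂ) :
    (∫ z, bargmannKernel N x z * (G z * u z) ∂gammaMeasure)
        - G x * ∫ z, bargmannKernel N x z * u z ∂gammaMeasure
      = ∫ z, (G z - G x) * (bargmannKernel N x z * u z) ∂gammaMeasure := by
  have hPu : Integrable (fun z => bargmannKernel N x z * u z) gammaMeasure :=
    (memLp_bargmannKernel hN x).integrable_mul hu
  have hcomm : Integrable (fun z => (G z - G x) * (bargmannKernel N x z * u z)) gammaMeasure := by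
    refine Integrable.mono'
      (((memLp_norm_sub_pow_mul_norm_bargmannKernel hN x 1).integrable_mul hu.norm).const_mul L)
      ((hG.continuous.sub continuous_const).aestronglyMeasurable.mul hPu.aestronglyMeasurable)
      (Filter.Eventually.of_forall fun z => ?_)
    simp only [norm_mul, Pi.mul_apply, pow_one, norm_sub_rev x z, ← mul_assoc]
    gcongr
    exact hG.norm_sub_le z x
  have hsplit : (fun z => bargmannKernel N x z * (G z * u z))
      = fun z => (G z - G x) * (bargmannKernel N x z * u z)
          + G x * (bargmannKernel N x z * u z) := by
    ext z; ring
  rw [hsplit, integral_add hcomm (hPu.const_mul _), integral_const_mul, add_sub_cancel_right]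

lemma enorm_bargmannKernel_commutator_le (hN : 0 < N) (hG : LipschitzWith L G)
    (hu : MemLp u 2 gammaMeasure) (x : ℂ) :
    ‖(∫ z, bargmannKernel N x z * (G z * u z) ∂gammaMeasure)
        - G x * ∫ z, bargmannKernel N x z * u z ∂gammaMeasure‖ₑ
      ≤ ∫⁻ z, L * (‖x - z‖ₑ * ‖bargmannKernel N x z‖ₑ) * ‖u z‖ₑ ∂gammaMeasure := by
  rw [integral_bargmannKernel_commutator_eq hN hG hu x]
  refine (enorm_integral_le_lintegral_enorm _).trans (lintegral_mono fun z => ?_)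
  rw [enorm_mul, enorm_mul, ← mul_assoc, ← mul_assoc, ← edist_eq_enorm_sub,
    ← edist_eq_enorm_sub, edist_comm x]
  gcongr
  exact hG.edist_le_mul z x

end Commutator

/-- For the Bargmann projection `P_N` and a Lipschitz function `g : ℂ → ℝ`
(as a multiplication operator), `‖[P_N, g]‖ ≤ C N^{-1/2} Lip(g)` with
`C = ∫₀^∞ √t e^{-t/2} dt`; the operator norm bound is expressed by the `L²` bound
`‖P_N(g u) − g P_N u‖_{L²(γ)} ≤ C N^{-1/2} Lip(g) ‖u‖_{L²(γ)}` for every `u ∈ L²(γ)`. -/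
theorem bargmann_commutator_bound (N : ℝ) (hN : 0 < N)
    (g : ℂ → ℝ) (L : ℝ≥0) (hg : LipschitzWith L g)
    (u : ℂ → ℂ) (hu : MemLp u 2 gammaMeasure) :
    eLpNorm (fun x : ℂ =>
        (∫ z : ℂ, bargmannKernel N x z * ((g z : ℂ) * u z) ∂gammaMeasure)
          - (g x : ℂ) * ∫ z : ℂ, bargmannKernel N x z * u z ∂gammaMeasure) 2 gammaMeasure
      ≤ ENNReal.ofReal
          ((∫ t in Set.Ioi (0 : ℝ), Real.sqrt t * Real.exp (-t / 2)) * (Real.sqrt N)⁻¹ * (L : ℝ))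
        * eLpNorm u 2 gammaMeasure := by
  set A := ENNReal.ofReal ((∫ t in Set.Ioi (0 : ℝ), √t * rexp (-t / 2)) * (√N)⁻¹)
  have hG : LipschitzWith L fun z => (g z : ℂ) := by
    simpa [Function.comp_def] using Complex.isometry_ofReal.lipschitz.comp hg
  have hrow (x : ℂ) : ∫⁻ z, L * (‖x - z‖ₑ * ‖bargmannKernel N x z‖ₑ) ∂gammaMeasure = L * A := by
    rw [lintegral_const_mul' _ _ ENNReal.coe_ne_top,
      lintegral_enorm_sub_mul_enorm_bargmannKernel_right hN]
  have hcol (z : ℂ) : ∫⁻ x, L * (‖x - z‖ₑ * ‖bargmannKernel N x z‖ₑ) ∂gammaMeasure = L * A := by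
    rw [lintegral_const_mul' _ _ ENNReal.coe_ne_top,
      lintegral_enorm_sub_mul_enorm_bargmannKernel_left hN]
  have hsq := eLpNorm_two_sq_le_of_schur (by fun_prop) hu.1 (fun x => (hrow x).le)
    (fun z => (hcol z).le) (enorm_bargmannKernel_commutator_le hN hG hu)
  rw [← sq, ← mul_pow] at hsq
  have hconst : ENNReal.ofReal ((∫ t in Set.Ioi (0 : ℝ), √t * rexp (-t / 2)) * (√N)⁻¹ * L)
      = L * A := by
    rw [ENNReal.ofReal_mul (by positivity), ENNReal.ofReal_coe_nnreal, mul_comm]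
  rw [hconst]
  exact (ENNReal.pow_le_pow_left_iff two_ne_zero).1 hsq
end
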